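/- Let G be a graph with a pendant vertex v whose unique neighbour is u. Then Σ_{W ⊆ V(G), v∈W} x^{|W|} y^{|N_G(W)|} = x · Σ_{W ⊆ V(G−v), u∈W} x^{|W|} y^{|N_{G−v}(W)|} + x y · J(G − v − u), and Σ_{W ⊆ V(G), v∉W} x^{|W|} y^{|N_G(W)|} = (y−1) · Σ_{W ⊆ V(G−v), u∈W} x^{|W|} y^{|N_{G−v}(W)|} + J(G − v). -/

import Mathlib

open Finset
open scoped Classical

/-- External neighbourhood N(W) = N[W] \ W of a vertex subset. -/
noncomputable def extN {V : Type} [Fintype V] (G : SimpleGraph V) (W : Finset V) : Finset V :=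
  Finset.univ.filter (fun v => v ∉ W ∧ ∃ w ∈ W, G.Adj v w)

/-- The bivariate domination polynomial J(G;x,y) = ∑_{W ⊆ V} x^|W| y^|N(W)|. -/
noncomputable def JP {V : Type} [Fintype V] (G : SimpleGraph V) (x y : ℝ) : ℝ :=
  ∑ W : Finset V, x ^ W.card * y ^ (extN G W).card

/-- Vertex deletion G − a. -/
noncomputable def Gdel {V : Type} (G : SimpleGraph V) (a : V) : SimpleGraph {v : V // v ≠ a} :=
  G.induce {v : V | v ≠ a}

/-- Deletion of a set of vertices. -/
noncomputable def GdelSet {V : Type} (G : SimpleGraph V) (S : Set V) : SimpleGraph {v : V // v ∉ S} :=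
  G.induce {v : V | v ∉ S}

/-- Vertex contraction G∖a: join all neighbours of a, then delete a. -/
noncomputable def Gcon {V : Type} (G : SimpleGraph V) (a : V) : SimpleGraph {v : V // v ≠ a} where
  Adj u v := u ≠ v ∧ (G.Adj u.val v.val ∨ (G.Adj u.val a ∧ G.Adj a v.val))
  symm := ⟨fun _ _ ⟨h1, h2⟩ =>
    ⟨fun e => h1 e.symm, h2.imp G.adj_symm (fun ⟨p, q⟩ => ⟨G.adj_symm q, G.adj_symm p⟩)⟩⟩
  loopless := ⟨fun _ h => h.1 rfl⟩

/-!
Sort the sets `W` by whether they contain `v` and `u`. The outer neighbourhood of `X` inside a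
vertex set `S` is the outer neighbourhood of `X ∩ S` in `G[S]`, as long as every neighbour in `S`
of a vertex of `X \ S` lies in `X`; so only the part of `N(W)` outside `S` needs to be computed.
Since `u` is the only neighbour of `v`:
* if `v ∉ W`, then `N_G(W)` is `N_{G-v}(W)`, plus `v` exactly when `u ∈ W`;
* if `u, v ∈ W`, then `N_G(W) = N_{G-v}(W - v)`;
* if `v ∈ W` and `u ∉ W`, then `N_G(W)` is `N_{G-v-u}(W - v)` plus `u`.
Summing these over the corresponding families of sets gives both identities.
-/

open Function (Embedding)

section Reindexing

variable {α β M : Type*} [Fintype α] [Fintype β] [DecidableEq β] [AddCommMonoid M]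

theorem sum_filter_notMem_eq_sum_map {a : β} (i : α ↪ β)
    (hi : ∀ b, b ∈ Set.range i ↔ b ≠ a) (f : Finset β → M) :
    ∑ W ∈ univ.filter (a ∉ ·), f W = ∑ W : Finset α, f (W.map i) := by
  refine (sum_congr (ext fun W => ?_) fun _ _ => rfl).trans
    (sum_map univ (mapEmbedding i).toEmbedding f)
  have hmap : ∀ b, b ∈ univ.map i ↔ b ≠ a := fun b => by simpa using hi b
  have h : W ⊆ univ.map i ↔ ∃ u : Finset α, W = u.map i := by
    simpa using subset_map_iff (s := W) (t := univ)
  simp only [subset_iff, hmap] at h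
  simp [eq_comm, ← h]

theorem sum_filter_notMem_eq_sum_map_subtype (a : β) (f : Finset β → M) :
    ∑ W ∈ univ.filter (a ∉ ·), f W =
      ∑ W : Finset {b // b ≠ a}, f (W.map (Embedding.subtype _)) :=
  sum_filter_notMem_eq_sum_map _ (by simp) f

theorem sum_filter_mem_eq_sum_filter_notMem_insert (a : β) (f : Finset β → M) :
    ∑ W ∈ univ.filter (a ∈ ·), f W = ∑ W ∈ univ.filter (a ∉ ·), f (insert a W) :=
  sum_nbij' (·.erase a) (insert a) (by simp) (by simp)
    (fun _ h => insert_erase (mem_filter.1 h).2) (fun _ h => erase_insert (mem_filter.1 h).2)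
    (fun _ h => by rw [insert_erase (mem_filter.1 h).2])

end Reindexing

section ExternalNeighbourhood

variable {V : Type} [Fintype V] {G : SimpleGraph V}

theorem mem_extN {W : Finset V} {a : V} :
    a ∈ extN G W ↔ a ∉ W ∧ ∃ w ∈ W, G.Adj a w := by
  simp [extN]

theorem filter_extN_eq_map_extN_induce (p : V → Prop) [DecidablePred p] {X : Finset V}
    {W : Finset (Subtype p)} (hW : X.filter p = W.map (Embedding.subtype p))
    (hX : ∀ a ∈ X, ¬ p a → ∀ b, p b → G.Adj b a → b ∈ X) :
    (extN G X).filter p = (extN (G.induce {x | p x}) W).map (Embedding.subtype p) := by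
  have hmem : ∀ b (hb : p b), b ∈ X ↔ ⟨b, hb⟩ ∈ W := fun b hb => by
    simpa [hb] using congrArg (b ∈ ·) hW
  ext b
  simp only [mem_filter, mem_map, mem_extN, Embedding.coe_subtype]
  constructor
  · rintro ⟨⟨hbX, w, hwX, hbw⟩, hb⟩
    by_cases hw : p w
    · exact ⟨⟨b, hb⟩, ⟨(hmem b hb).not.1 hbX, ⟨w, hw⟩, (hmem w hw).1 hwX, hbw⟩,
        rfl⟩
    · exact absurd (hX w hwX hw b hb hbw) hbX
  · rintro ⟨⟨b, hb⟩, ⟨hbW, ⟨w, hw⟩, hwW, hbw⟩, rfl⟩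
    exact ⟨⟨(hmem b hb).not.2 hbW, w, (hmem w hw).2 hwW, hbw⟩, hb⟩

theorem card_extN_eq_card_extN_induce_add (p : V → Prop) [DecidablePred p] {X : Finset V}
    {W : Finset (Subtype p)} (hW : X.filter p = W.map (Embedding.subtype p))
    (hX : ∀ a ∈ X, ¬ p a → ∀ b, p b → G.Adj b a → b ∈ X) :
    #(extN G X) = #(extN (G.induce {x | p x}) W) + #((extN G X).filter (¬ p ·)) := by
  rw [← card_filter_add_card_filter_not p, filter_extN_eq_map_extN_induce p hW hX, card_map]

end ExternalNeighbourhood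

section PendantVertex

variable {V : Type} [Fintype V] {G : SimpleGraph V} {u v : V}

theorem card_extN_map_eq_of_pendant (hvu : ∀ w, G.Adj v w ↔ w = u) (hu : u ≠ v)
    (W : Finset {w : V // w ≠ v}) :
    #(extN G (W.map (Embedding.subtype _))) =
      #(extN (Gdel G v) W) + if ⟨u, hu⟩ ∈ W then 1 else 0 := by
  rw [card_extN_eq_card_extN_induce_add (W := W) (· ≠ v) (by simp +contextual)
    (by simp +contextual)]
  congr 1
  split_ifs with huW
  · exact card_eq_one.2 ⟨v, by ext a; simp [mem_extN]; aesop⟩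
  · exact card_eq_zero.2 (by ext a; simp [mem_extN]; aesop)

theorem card_extN_insert_eq_of_pendant_of_mem (hvu : ∀ w, G.Adj v w ↔ w = u) (hu : u ≠ v)
    {W : Finset {w : V // w ≠ v}} (huW : ⟨u, hu⟩ ∈ W) :
    #(extN G (insert v (W.map (Embedding.subtype _)))) = #(extN (Gdel G v) W) := by
  have hvu' : ∀ b, G.Adj b v ↔ b = u := fun b => (G.adj_comm b v).trans (hvu b)
  rw [card_extN_eq_card_extN_induce_add (W := W) (· ≠ v) (by simp +contextual [filter_insert])
    (by aesop)]
  refine (congrArg _ (card_eq_zero.2 ?_)).trans (add_zero _)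
  ext a
  simp [mem_extN]
  tauto

theorem card_extN_insert_eq_of_pendant_of_notMem (hvu : ∀ w, G.Adj v w ↔ w = u)
    (W : Finset {w : V // w ∉ ({w | w = v ∨ w = u} : Set V)}) :
    #(extN G (insert v (W.map (Embedding.subtype _)))) =
      #(extN (GdelSet G {w | w = v ∨ w = u}) W) + 1 := by
  have hu : u ≠ v := ((hvu u).2 rfl).ne'
  have hvu' : ∀ b, G.Adj b v ↔ b = u := fun b => (G.adj_comm b v).trans (hvu b)
  rw [card_extN_eq_card_extN_induce_add (W := W) (· ∉ ({w | w = v ∨ w = u} : Set V))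
    (by simp +contextual [filter_insert]) (by aesop)]
  refine congrArg _ (card_eq_one.2 ⟨u, ?_⟩)
  ext a
  simp [mem_extN]
  aesop

theorem sum_filter_notMem_of_pendant (hvu : ∀ w, G.Adj v w ↔ w = u) (hu : u ≠ v)
    (x y : ℝ) :
    ∑ W ∈ univ.filter (v ∉ ·), x ^ #W * y ^ #(extN G W) =
      (y - 1) * ∑ W ∈ univ.filter (⟨u, hu⟩ ∈ ·), x ^ #W * y ^ #(extN (Gdel G v) W) +
        JP (Gdel G v) x y := by
  have hterm (W : Finset {w : V // w ≠ v}) :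
      x ^ #(W.map (Embedding.subtype _)) *
          y ^ #(extN G (W.map (Embedding.subtype _))) =
        if ⟨u, hu⟩ ∈ W then y * (x ^ #W * y ^ #(extN (Gdel G v) W))
        else x ^ #W * y ^ #(extN (Gdel G v) W) := by
    rw [card_map, card_extN_map_eq_of_pendant hvu hu]
    split_ifs <;> ring
  rw [sum_filter_notMem_eq_sum_map_subtype, sum_congr rfl fun W _ => hterm W, sum_ite, ← mul_sum,
    JP, ← sum_filter_add_sum_filter_not univ (⟨u, hu⟩ ∈ ·)]
  ring

theorem sum_filter_mem_of_pendant (hvu : ∀ w, G.Adj v w ↔ w = u) (hu : u ≠ v) (x y : ℝ) :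
    ∑ W ∈ univ.filter (v ∈ ·), x ^ #W * y ^ #(extN G W) =
      x * ∑ W ∈ univ.filter (⟨u, hu⟩ ∈ ·), x ^ #W * y ^ #(extN (Gdel G v) W) +
        x * y * JP (GdelSet G {w | w = v ∨ w = u}) x y := by
  let i : {w : V // w ∉ ({w | w = v ∨ w = u} : Set V)} ↪ {w : V // w ≠ v} :=
    Subtype.impEmbedding _ _ fun w hw => hw ∘ Or.inl
  have hi : ∀ b, b ∈ Set.range i ↔ b ≠ ⟨u, hu⟩ := fun b =>
    ⟨by rintro ⟨c, rfl⟩ h; exact c.2 (Or.inr (congrArg Subtype.val h)),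
      fun hb => ⟨⟨b, by rintro (h | h); exacts [b.2 h, hb (Subtype.ext h)]⟩, rfl⟩⟩
  rw [sum_filter_mem_eq_sum_filter_notMem_insert, sum_filter_notMem_eq_sum_map_subtype,
    ← sum_filter_add_sum_filter_not univ (⟨u, hu⟩ ∈ ·), sum_filter_notMem_eq_sum_map i hi,
    JP, mul_sum, mul_sum]
  congr 1
  · refine sum_congr rfl fun W hW => ?_
    rw [card_insert_of_notMem (by simp), card_map,
      card_extN_insert_eq_of_pendant_of_mem hvu hu (mem_filter.1 hW).2]
    ring
  · refine sum_congr rfl fun W _ => ?_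
    rw [map_map, show i.trans (Embedding.subtype _) = Embedding.subtype _ from rfl,
      card_insert_of_notMem (by simp), card_map, card_extN_insert_eq_of_pendant_of_notMem hvu]
    ring

end PendantVertex

theorem J_pendant_conditional {V : Type} [Fintype V] (G : SimpleGraph V) (u v : V)
    (hadj : G.Adj v u) (hdeg : Finset.univ.filter (fun w => G.Adj v w) = {u}) (x y : ℝ) :
    (∑ W ∈ Finset.univ.filter (fun W : Finset V => v ∈ W),
        x ^ W.card * y ^ (extN G W).card
      = x * (∑ W ∈ Finset.univ.filter
            (fun W : Finset {w : V // w ≠ v} => (⟨u, hadj.ne'⟩ : {w : V // w ≠ v}) ∈ W),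
          x ^ W.card * y ^ (extN (Gdel G v) W).card)
        + x * y * JP (GdelSet G {w : V | w = v ∨ w = u}) x y)
    ∧ (∑ W ∈ Finset.univ.filter (fun W : Finset V => v ∉ W),
        x ^ W.card * y ^ (extN G W).card
      = (y - 1) * (∑ W ∈ Finset.univ.filter
            (fun W : Finset {w : V // w ≠ v} => (⟨u, hadj.ne'⟩ : {w : V // w ≠ v}) ∈ W),
          x ^ W.card * y ^ (extN (Gdel G v) W).card)
        + JP (Gdel G v) x y) := by
  have hvu : ∀ w, G.Adj v w ↔ w = u := fun w => by simpa using Finset.ext_iff.mp hdeg w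
  exact ⟨sum_filter_mem_of_pendant hvu hadj.ne' x y,
    sum_filter_notMem_of_pendant hvu hadj.ne' x y⟩
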